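/- In a lattice-ordered family of spectral resolutions on a σ-MV-effect algebra, the sum distributes over join: for bounded observables x, y, z, B_{(x∨y)+z}(t) = B_{(x+z)∨(y+z)}(t) for all t ∈ ℝ, where B_{x∨y}(t) = B_x(t) ∧ B_y(t) and B_{u+v}(t) = ⋁_{r∈ℚ}(B_u(r) ∧ B_v(t−r)). Hence bounded observables form a lattice-ordered commutative semigroup under the Olson order. -/
import Mathlib


open Set

/-- A σ-complete MV-effect algebra: an MV-algebra (with `⊕`, `¬`, `⊥ = 0`,
`⊤ = 1`) whose natural order is the given lattice order and in which every
countable subset has a supremum and an infimum (given by `sSup`/`sInf`). -/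
class SigmaMVEffectAlgebra (E : Type*) extends
    Lattice E, BoundedOrder E, SupSet E, InfSet E where
  oplus : E → E → E
  neg : E → E
  oplus_assoc : ∀ a b c : E, oplus (oplus a b) c = oplus a (oplus b c)
  oplus_comm : ∀ a b : E, oplus a b = oplus b a
  oplus_bot : ∀ a : E, oplus a ⊥ = a
  neg_neg : ∀ a : E, neg (neg a) = a
  oplus_top : ∀ a : E, oplus a ⊤ = ⊤
  neg_bot : neg (⊥ : E) = ⊤
  luk : ∀ a b : E, oplus (neg (oplus (neg a) b)) b = oplus (neg (oplus (neg b) a)) a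
  le_iff_oplus : ∀ a b : E, a ≤ b ↔ oplus (neg a) b = ⊤
  isLUB_sSup : ∀ s : Set E, s.Countable → IsLUB s (sSup s)
  isGLB_sInf : ∀ s : Set E, s.Countable → IsGLB s (sInf s)

namespace SigmaMVEffectAlgebra

variable {E : Type*} [SigmaMVEffectAlgebra E]

open Classical in
/-- The partial effect-algebra addition of the MV-effect algebra:
`a + b` is defined iff `a ≤ b'`, and then `a + b = a ⊕ b`. -/
noncomputable def padd (a b : E) : Option E :=
  if a ≤ neg b then some (oplus a b) else none

/-- An observable on `E`: a `σ`-homomorphism from the Borel σ-algebra of `ℝ`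
into `E`. -/
structure Observable (E : Type*) [SigmaMVEffectAlgebra E] where
  toFun : Set ℝ → E
  total : toFun Set.univ = ⊤
  additive : ∀ A B : Set ℝ, MeasurableSet A → MeasurableSet B → Disjoint A B →
    padd (toFun A) (toFun B) = some (toFun (A ∪ B))
  cont : ∀ A : ℕ → Set ℝ, (∀ n, MeasurableSet (A n)) → Monotone A →
    IsLUB (Set.range fun n => toFun (A n)) (toFun (⋃ n, A n))

/-- An observable is bounded if `x([α,β]) = 1` for some interval. -/
def Observable.Bounded (x : Observable E) : Prop :=
  ∃ α β : ℝ, x.toFun (Set.Icc α β) = ⊤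

/-- The spectral resolution `B_x(t) = x((-∞,t))` of an observable. -/
def spec (x : Observable E) (t : ℝ) : E := x.toFun (Set.Iio t)

end SigmaMVEffectAlgebra

namespace SigmaMVEffectAlgebra

variable {E : Type*} [SigmaMVEffectAlgebra E]

/-- The Łukasiewicz product `a ⊙ b = ¬(¬a ⊕ ¬b)`. -/
def odot (a b : E) : E := neg (oplus (neg a) (neg b))

lemma oplus_neg_self (a : E) : oplus (neg a) a = ⊤ :=
  (le_iff_oplus a a).1 le_rfl

lemma top_oplus (a : E) : oplus (⊤ : E) a = ⊤ := by
  rw [oplus_comm, oplus_top]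

lemma le_oplus (a b : E) : a ≤ oplus a b := by
  rw [le_iff_oplus, ← oplus_assoc, oplus_neg_self, top_oplus]

lemma le_oplus' (a b : E) : a ≤ oplus b a := by
  rw [oplus_comm]; exact le_oplus a b

lemma odot_le_iff (a b c : E) : odot a b ≤ c ↔ a ≤ oplus (neg b) c := by
  rw [le_iff_oplus, le_iff_oplus, odot, neg_neg, oplus_assoc]

lemma neg_le_neg' {a b : E} (h : a ≤ b) : neg b ≤ neg a := by
  rw [le_iff_oplus] at h ⊢
  rw [neg_neg, oplus_comm]
  exact h

lemma oplus_le_oplus_right {a b : E} (h : a ≤ b) (c : E) :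
    oplus c a ≤ oplus c b := by
  have h1 : odot (oplus c a) (neg c) ≤ a := by
    rw [odot_le_iff, neg_neg]
  rw [show oplus c b = oplus (neg (neg c)) b by rw [neg_neg],
    ← odot_le_iff]
  exact h1.trans h

lemma oplus_le_oplus_left {a b : E} (h : a ≤ b) (c : E) :
    oplus a c ≤ oplus b c := by
  rw [oplus_comm a c, oplus_comm b c]; exact oplus_le_oplus_right h c

lemma odot_le_odot_right {a b : E} (h : a ≤ b) (c : E) :
    odot c a ≤ odot c b :=
  neg_le_neg' (oplus_le_oplus_right (neg_le_neg' h) _)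

lemma odot_le_odot_left {a b : E} (h : a ≤ b) (c : E) :
    odot a c ≤ odot b c :=
  neg_le_neg' (oplus_le_oplus_left (neg_le_neg' h) _)

/-- The lattice join coincides with the MV join `¬(¬a ⊕ b) ⊕ b`. -/
lemma sup_eq_mv (a b : E) : a ⊔ b = oplus (neg (oplus (neg a) b)) b := by
  refine le_antisymm (sup_le ?_ ?_) ?_
  · rw [luk]; exact le_oplus' _ _
  · exact le_oplus' _ _
  · have h1 : oplus (neg (oplus (neg a) b)) b ≤
        oplus (neg (oplus (neg (a ⊔ b)) b)) b := by
      refine oplus_le_oplus_left (neg_le_neg' ?_) b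
      exact oplus_le_oplus_left (neg_le_neg' le_sup_left) b
    have h2 : oplus (neg (oplus (neg (a ⊔ b)) b)) b =
        oplus (neg (oplus (neg b) (a ⊔ b))) (a ⊔ b) := luk _ _
    have h3 : oplus (neg b) (a ⊔ b) = ⊤ := (le_iff_oplus b (a ⊔ b)).1 le_sup_right
    rw [h2, h3] at h1
    rw [show neg (⊤ : E) = ⊥ by rw [← neg_bot, neg_neg],
      oplus_comm (⊥ : E) (a ⊔ b), oplus_bot] at h1
    exact h1

lemma inf_eq_neg_sup (a b : E) : a ⊓ b = neg (neg a ⊔ neg b) := by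
  refine le_antisymm ?_ (le_inf ?_ ?_)
  · have h : neg a ⊔ neg b ≤ neg (a ⊓ b) :=
      sup_le (neg_le_neg' inf_le_left) (neg_le_neg' inf_le_right)
    have := neg_le_neg' h
    rwa [neg_neg] at this
  · have := neg_le_neg' (le_sup_left (a := neg a) (b := neg b))
    rwa [neg_neg] at this
  · have := neg_le_neg' (le_sup_right (a := neg a) (b := neg b))
    rwa [neg_neg] at this

/-- The lattice meet coincides with the MV meet `b ⊙ (¬b ⊕ a)`. -/
lemma inf_eq_mv (a b : E) : a ⊓ b = odot b (oplus (neg b) a) := by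
  rw [inf_eq_neg_sup, sup_eq_mv, odot, neg_neg]
  congr 1
  rw [oplus_comm a (neg b), oplus_comm (neg (oplus (neg b) a)) (neg b)]

lemma isLUB_iSup (f : ℚ → E) : IsLUB (Set.range f) (⨆ r, f r) :=
  isLUB_sSup (Set.range f) (Set.countable_range f)

lemma le_iSup' (f : ℚ → E) (r : ℚ) : f r ≤ ⨆ q, f q :=
  (isLUB_iSup f).1 ⟨r, rfl⟩

lemma iSup_le' {f : ℚ → E} {u : E} (h : ∀ r, f r ≤ u) : (⨆ r, f r) ≤ u :=
  (isLUB_iSup f).2 (by rintro _ ⟨r, rfl⟩; exact h r)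

/-- `⊙` distributes over countable suprema (via residuation). -/
lemma odot_iSup (a : E) (f : ℚ → E) :
    odot (⨆ r, f r) a = ⨆ r, odot (f r) a := by
  refine le_antisymm ?_ (iSup_le' fun r => odot_le_odot_left (le_iSup' f r) a)
  rw [odot_le_iff]
  exact iSup_le' fun r => (odot_le_iff _ _ _).1 (le_iSup' (fun q => odot (f q) a) r)

/-- Countable meet-distributivity in a σ-MV-effect algebra. -/
lemma inf_iSup_le (a : E) (f : ℚ → E) :
    a ⊓ (⨆ r, f r) ≤ ⨆ r, a ⊓ f r := by
  rw [inf_eq_mv, odot_iSup]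
  refine iSup_le' fun r => ?_
  have h1 : odot (f r) (oplus (neg (⨆ q, f q)) a) ≤
      odot (f r) (oplus (neg (f r)) a) :=
    odot_le_odot_right (oplus_le_oplus_left (neg_le_neg' (le_iSup' f r)) a) _
  exact h1.trans ((inf_eq_mv a (f r)).symm.le.trans (le_iSup' (fun q => a ⊓ f q) r))

/-- Spectral resolutions are monotone. -/
lemma spec_mono (x : Observable E) {s t : ℝ} (h : s ≤ t) :
    spec x s ≤ spec x t := by
  have hadd := x.additive (Set.Iio s) (Set.Iio t \ Set.Iio s) measurableSet_Iio
    (measurableSet_Iio.diff measurableSet_Iio) disjoint_sdiff_self_right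
  have hu : Set.Iio s ∪ (Set.Iio t \ Set.Iio s) = Set.Iio t :=
    Set.union_diff_cancel (Set.Iio_subset_Iio h)
  rw [padd] at hadd
  split_ifs at hadd with hc
  · simp only [Option.some.injEq] at hadd
    rw [spec, spec, ← hu, ← hadd]
    exact le_oplus _ _

end SigmaMVEffectAlgebra

open SigmaMVEffectAlgebra in
/-- The sum of bounded observables distributes over the Olson-order join:
`B_{(x∨y)+z}(t) = B_{(x+z)∨(y+z)}(t)`, where `B_{x∨y}(t) = B_x(t) ∧ B_y(t)`
and `B_{u+v}(t) = ⋁_{r∈ℚ}(B_u(r) ∧ B_v(t−r))`. Hence the bounded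
observables form a lattice-ordered commutative semigroup under the Olson
order. -/
theorem sum_distributes_over_olson_join
    {E : Type*} [SigmaMVEffectAlgebra E] (x y z : Observable E)
    (hx : x.Bounded) (hy : y.Bounded) (hz : z.Bounded) (t : ℝ) :
    (⨆ r : ℚ, (spec x r ⊓ spec y r) ⊓ spec z (t - r)) =
      (⨆ r : ℚ, spec x r ⊓ spec z (t - r)) ⊓
        (⨆ r : ℚ, spec y r ⊓ spec z (t - r)) := by
  refine le_antisymm ?_ ?_
  · refine iSup_le' fun r => le_inf ?_ ?_
    · exact le_trans (le_inf (inf_le_left.trans inf_le_left) inf_le_right)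
        (le_iSup' (fun q : ℚ => spec x (q : ℝ) ⊓ spec z (t - q)) r)
    · exact le_trans (le_inf (inf_le_left.trans inf_le_right) inf_le_right)
        (le_iSup' (fun q : ℚ => spec y (q : ℝ) ⊓ spec z (t - q)) r)
  · have key : ∀ r s : ℚ,
        (spec y (s : ℝ) ⊓ spec z (t - s)) ⊓ (spec x (r : ℝ) ⊓ spec z (t - r)) ≤
          ⨆ q : ℚ, (spec x (q : ℝ) ⊓ spec y (q : ℝ)) ⊓ spec z (t - q) := by
      intro r s
      refine le_trans ?_
        (le_iSup' (fun q : ℚ => (spec x (q : ℝ) ⊓ spec y (q : ℝ)) ⊓ spec z (t - q))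
          (max r s))
      have hx' : spec x (r : ℝ) ≤ spec x ((max r s : ℚ) : ℝ) :=
        spec_mono x (by exact_mod_cast le_max_left r s)
      have hy' : spec y (s : ℝ) ≤ spec y ((max r s : ℚ) : ℝ) :=
        spec_mono y (by exact_mod_cast le_max_right r s)
      have hz' : spec z (t - r) ⊓ spec z (t - s) ≤ spec z (t - ((max r s : ℚ) : ℝ)) := by
        rcases le_total r s with h | h
        · rw [max_eq_right h]; exact inf_le_right
        · rw [max_eq_left h]; exact inf_le_left
      refine le_inf (le_inf ?_ ?_) ?_
      · exact (inf_le_right.trans inf_le_left).trans hx'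
      · exact (inf_le_left.trans inf_le_left).trans hy'
      · exact (le_inf (inf_le_right.trans inf_le_right)
          (inf_le_left.trans inf_le_right)).trans hz'
    calc (⨆ r : ℚ, spec x (r : ℝ) ⊓ spec z (t - r)) ⊓
          (⨆ r : ℚ, spec y (r : ℝ) ⊓ spec z (t - r))
        ≤ ⨆ s : ℚ, (⨆ r : ℚ, spec x (r : ℝ) ⊓ spec z (t - r)) ⊓
            (spec y (s : ℝ) ⊓ spec z (t - s)) := inf_iSup_le _ _
      _ ≤ ⨆ q : ℚ, (spec x (q : ℝ) ⊓ spec y (q : ℝ)) ⊓ spec z (t - q) := by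
          refine iSup_le' fun s => ?_
          rw [inf_comm]
          exact (inf_iSup_le _ _).trans (iSup_le' fun r => key r s)
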